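/- For every integer k ≥ 2 and every real z ≥ 0, one has f_{k−1}(z) = 1/e_k(z) + (z·e_{k−1}(z)/(k·e_k(z)))·f_k(z). -/

import Mathlib

open scoped Nat

/-- `f k z = e^{-z} · ₁F₁(1; k+1; z) = e^{-z} · Σ_{r=0}^∞ k! z^r / (r+k)!`. -/
noncomputable def rieszF (k : ℕ) (z : ℝ) : ℝ :=
  Real.exp (-z) * ∑' r : ℕ, (k ! : ℝ) * z ^ r / (r + k)!

/-- `e k z = Σ_{r=0}^{k-1} z^r / r!`, the sum of the first `k` terms of the
exponential series. -/
noncomputable def expPartial (k : ℕ) (z : ℝ) : ℝ :=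
  ∑ r ∈ Finset.range k, z ^ r / r !

/-!
Shifting the series of `rieszF` by one term gives the contiguous relation
`f_k = e^{-z} + z/(k+1) · f_{k+1}`, and recognising it as an exponential tail gives the closed
form `z^k/k! · f_k = 1 - e^{-z} e_k`, valid for all `z`. Eliminating `e^{-z}` between the two,
using `e_k = e_{k-1} + z^{k-1}/(k-1)!`, yields the recursion.
-/

lemma summable_factorial_mul_pow_div_factorial_add (k : ℕ) (z : ℝ) :
    Summable fun r : ℕ ↦ (k ! : ℝ) * z ^ r / (r + k)! := by
  refine .of_norm_bounded (Real.summable_pow_div_factorial |z|) fun r ↦ ?_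
  have hle : ((r ! * k ! : ℕ) : ℝ) ≤ (r + k)! :=
    mod_cast Nat.le_of_dvd (Nat.factorial_pos _) <|
      Nat.factorial_mul_factorial_dvd_factorial_add r k
  push_cast at hle
  rw [Real.norm_eq_abs, abs_div, abs_mul, abs_pow, Nat.abs_cast, Nat.abs_cast,
    div_le_div_iff₀ (by positivity) (by positivity)]
  nlinarith [pow_nonneg (abs_nonneg z) r, Nat.factorial_pos k]

lemma rieszF_eq_exp_neg_add (k : ℕ) (z : ℝ) :
    rieszF k z = Real.exp (-z) + z / (k + 1) * rieszF (k + 1) z := by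
  have hterm (r : ℕ) : (k ! : ℝ) * z ^ (r + 1) / (r + 1 + k)!
      = z / (k + 1) * (((k + 1)! : ℝ) * z ^ r / (r + (k + 1))!) := by
    rw [show r + 1 + k = r + (k + 1) by ring, Nat.factorial_succ]
    push_cast
    field_simp
    ring
  rw [rieszF, rieszF, (summable_factorial_mul_pow_div_factorial_add k z).tsum_eq_zero_add,
    tsum_congr hterm, tsum_mul_left]
  simp only [pow_zero, zero_add, mul_one]
  rw [div_self (by positivity)]
  ring

lemma expPartial_add_tsum (k : ℕ) (z : ℝ) :
    expPartial k z + ∑' r : ℕ, z ^ (r + k) / (r + k)! = Real.exp z := by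
  rw [expPartial, (Real.summable_pow_div_factorial z).sum_add_tsum_nat_add,
    Real.exp_eq_exp_ℝ, NormedSpace.exp_eq_tsum_div]

lemma pow_div_factorial_mul_rieszF (k : ℕ) (z : ℝ) :
    z ^ k / k ! * rieszF k z = 1 - Real.exp (-z) * expPartial k z := by
  have hterm (r : ℕ) : z ^ k / k ! * ((k ! : ℝ) * z ^ r / (r + k)!) = z ^ (r + k) / (r + k)! := by
    field_simp
    ring
  rw [rieszF, mul_left_comm, ← tsum_mul_left, tsum_congr hterm, ← Real.exp_zero,
    ← neg_add_cancel z, Real.exp_add, ← expPartial_add_tsum k z]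
  ring

lemma one_le_expPartial {k : ℕ} (hk : 1 ≤ k) {z : ℝ} (hz : 0 ≤ z) : 1 ≤ expPartial k z := by
  calc (1 : ℝ) = ∑ r ∈ Finset.range 1, z ^ r / r ! := by simp
    _ ≤ ∑ r ∈ Finset.range k, z ^ r / r ! :=
      Finset.sum_le_sum_of_subset_of_nonneg (Finset.range_subset_range.mpr hk)
        fun _ _ _ ↦ by positivity

lemma expPartial_succ (k : ℕ) (z : ℝ) : expPartial (k + 1) z = expPartial k z + z ^ k / k ! :=
  Finset.sum_range_succ _ _

theorem rieszF_step_recursion (k : ℕ) (hk : 2 ≤ k) (z : ℝ) (hz : 0 ≤ z) :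
    rieszF (k - 1) z =
      1 / expPartial k z
        + (z * expPartial (k - 1) z / (k * expPartial k z)) * rieszF k z := by
  obtain ⟨m, rfl⟩ : ∃ m, k = m + 1 := ⟨k - 1, by omega⟩
  rw [Nat.add_sub_cancel]
  have hrec := rieszF_eq_exp_neg_add m z
  have hclosed := pow_div_factorial_mul_rieszF (m + 1) z
  rw [Nat.factorial_succ, Nat.cast_mul, ← div_div] at hclosed
  push_cast at hclosed ⊢
  have hmul : expPartial (m + 1) z * rieszF m z
      = 1 + z * expPartial m z / (m + 1) * rieszF (m + 1) z := by
    linear_combination expPartial (m + 1) z * hrec + hclosed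
      + z * rieszF (m + 1) z / (m + 1) * expPartial_succ m z
  have hne : expPartial (m + 1) z ≠ 0 :=
    (one_pos.trans_le (one_le_expPartial (Nat.le_add_left 1 m) hz)).ne'
  field_simp at hmul ⊢
  linear_combination hmul
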